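/- For s ∈ [0,1] let E(s) be the 6×6 real matrix with E(s)(1,1) = E(s)(6,6) = 1, whose middle 4×4 block (rows and columns 2,3,4,5) has rows (cos(πs/2), sin(πs/2), 0, 0), (0, cos(πs/2), 0, sin(πs/2)), (−sin(πs/2), 0, cos(πs/2), 0), (0, 0, sin(πs/2), cos(πs/2)), and all other entries zero. Then det E(s) = cos⁴(πs/2) + sin⁴(πs/2) > 0 for every s ∈ [0,1], E(0) = I₆, and E(1)⁻¹ · J₀ · E(1) = K. -/

import Mathlib

open Matrix Real

/-- The almost complex structure matrix `J₀`. -/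
def J₀ : Matrix (Fin 6) (Fin 6) ℝ :=
  !![0, 0, 0, -1, 0, 0;
     0, 0, -1, 0, 0, 0;
     0, 1, 0, 0, 0, 0;
     1, 0, 0, 0, 0, 0;
     0, 0, 0, 0, 0, -1;
     0, 0, 0, 0, 1, 0]

/-- The almost complex structure matrix `K`. -/
def K : Matrix (Fin 6) (Fin 6) ℝ :=
  !![0, 1, 0, 0, 0, 0;
     -1, 0, 0, 0, 0, 0;
     0, 0, 0, 0, -1, 0;
     0, 0, 0, 0, 0, -1;
     0, 0, 1, 0, 0, 0;
     0, 0, 0, 1, 0, 0]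

/-- The path of matrices `E(s)`. -/
noncomputable def E (s : ℝ) : Matrix (Fin 6) (Fin 6) ℝ :=
  !![1, 0, 0, 0, 0, 0;
     0, Real.cos (π * s / 2), Real.sin (π * s / 2), 0, 0, 0;
     0, 0, Real.cos (π * s / 2), 0, Real.sin (π * s / 2), 0;
     0, -Real.sin (π * s / 2), 0, Real.cos (π * s / 2), 0, 0;
     0, 0, 0, Real.sin (π * s / 2), Real.cos (π * s / 2), 0;
     0, 0, 0, 0, 0, 1]


@[simp] lemma cons_val_five {α : Type*} (x : α) (u : Fin 5 → α) :
    Matrix.vecCons x u 5 = u 4 := rfl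

set_option maxRecDepth 4000 in
lemma det_E (s : ℝ) :
    (E s).det = Real.cos (π * s / 2) ^ 4 + Real.sin (π * s / 2) ^ 4 := by
  simp [E, Matrix.det_succ_row_zero, Fin.sum_univ_succ, Fin.succAbove, Fin.ext_iff]
  ring

theorem stmt_1 :
    (∀ s ∈ Set.Icc (0 : ℝ) 1,
      (E s).det = Real.cos (π * s / 2) ^ 4 + Real.sin (π * s / 2) ^ 4 ∧ 0 < (E s).det)
    ∧ E 0 = 1
    ∧ (E 1)⁻¹ * J₀ * E 1 = K := by
  refine ⟨fun s _ => ⟨det_E s, ?_⟩, ?_, ?_⟩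
  · rw [det_E]
    nlinarith [Real.sin_sq_add_cos_sq (π * s / 2),
      sq_nonneg (Real.sin (π * s / 2) ^ 2 - Real.cos (π * s / 2) ^ 2)]
  · ext i j
    fin_cases i <;> fin_cases j <;> simp [E, Matrix.one_apply, Matrix.vecHead, Matrix.vecTail]
  · have h1 : Real.cos (π * 1 / 2) = 0 := by norm_num [Real.cos_pi_div_two]
    have h2 : Real.sin (π * 1 / 2) = 1 := by norm_num [Real.sin_pi_div_two]
    have hdet : (E 1).det ≠ 0 := by rw [det_E, h1, h2]; norm_num
    have hcomm : J₀ * E 1 = E 1 * K := by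
      ext i j
      fin_cases i <;> fin_cases j <;>
        simp [E, J₀, K, h1, h2, Matrix.mul_apply, Fin.sum_univ_succ]
    rw [Matrix.mul_assoc, hcomm, ← Matrix.mul_assoc,
      Matrix.nonsing_inv_mul _ (isUnit_iff_ne_zero.mpr hdet), Matrix.one_mul]
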